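/- arXiv:2001.00539 — 2 statements merged into one kernel-verified Lean document; each statement's English description precedes it below -/
import Mathlib

section
/- Let n ≥ 2, let G be a subgroup of (Z/nZ)^×, let d be a divisor of n with d < n, and let G' be the image of G under reduction modulo n/d (a subgroup of (Z/(n/d)Z)^×). For any s ∈ Z/nZ with gcd(s, n) = d, the set {g·s : g ∈ G} (products in Z/nZ) equals d · (G' · (s/d)), the coset of G' containing s/d in (Z/(n/d)Z)^×, scaled by d. In particular {g·s : g ∈ G} is contained in {a : gcd(a,n) = d}. -/
/-!
Write `s = d * t`. Since `d * (k mod n/d) ≡ d * k (mod n)`, the map `u ↦ d * u.val` from `ZMod (n/d)`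
to `ZMod n` sends `ḡ * t` to `g * (d * t) = g * s`, where `ḡ` is the reduction of `g` modulo `n/d`;
so it maps `G' * t` onto `G * s`. Multiplying by a unit does not change the gcd with `n`.
-/

namespace ZMod

theorem gcd_val_unit_mul {n : ℕ} (u : (ZMod n)ˣ) (x : ZMod n) :
    ((u : ZMod n) * x).val.gcd n = x.val.gcd n := by
  rw [val_mul, ← Nat.gcd_rec, Nat.gcd_comm]
  exact (val_coe_unit_coprime u).gcd_mul_left_cancel _

theorem natCast_mul_val_natCast_div {n d : ℕ} (hd : d ∣ n) (k : ℕ) :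
    ((d * (k : ZMod (n / d)).val : ℕ) : ZMod n) = d * k := by
  obtain ⟨m, rfl⟩ := hd
  rcases d.eq_zero_or_pos with rfl | hd0
  · simp
  rw [Nat.mul_div_cancel_left m hd0, val_natCast, ← Nat.cast_mul, natCast_eq_natCast_iff',
    Nat.mul_mod_mul_left, Nat.mul_mod_mul_left, Nat.mod_mod]

theorem natCast_mul_val_castHom_mul {n d : ℕ} [NeZero n] (hd : d ∣ n) (x : ZMod n) (k : ℕ) :
    ((d * (castHom (Nat.div_dvd_of_dvd hd) (ZMod (n / d)) x * k).val : ℕ) : ZMod n) =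
      x * (d * k) := by
  rw [castHom_apply, cast_eq_val, ← Nat.cast_mul, natCast_mul_val_natCast_div hd]
  push_cast
  rw [natCast_zmod_val]
  ring

end ZMod

theorem stmt_5_general (n : ℕ) (hn : 2 ≤ n) (G : Subgroup (ZMod n)ˣ)
    (d : ℕ) (hd : d ∣ n)
    (s : ZMod n) (hs : Nat.gcd s.val n = d) :
    let G' : Subgroup (ZMod (n / d))ˣ :=
      Subgroup.map (Units.map (ZMod.castHom (Nat.div_dvd_of_dvd hd) (ZMod (n / d))).toMonoidHom) G
    ({x : ZMod n | ∃ g : (ZMod n)ˣ, g ∈ G ∧ x = (g : ZMod n) * s} =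
      (fun u : ZMod (n / d) => ((d * u.val : ℕ) : ZMod n)) ''
        {u : ZMod (n / d) | ∃ g' : (ZMod (n / d))ˣ, g' ∈ G' ∧
          u = (g' : ZMod (n / d)) * ((s.val / d : ℕ) : ZMod (n / d))}) ∧
    {x : ZMod n | ∃ g : (ZMod n)ˣ, g ∈ G ∧ x = (g : ZMod n) * s} ⊆
      {a : ZMod n | Nat.gcd a.val n = d} := by
  intro G'
  have : NeZero n := ⟨by omega⟩
  have hs_eq : s = d * (s.val / d : ℕ) := by
    rw [← Nat.cast_mul, Nat.mul_div_cancel' (hs ▸ Nat.gcd_dvd_left _ _), ZMod.natCast_zmod_val]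
  have key : ∀ g : (ZMod n)ˣ, ((d * (ZMod.castHom (Nat.div_dvd_of_dvd hd) (ZMod (n / d)) g *
      (s.val / d : ℕ)).val : ℕ) : ZMod n) = g * s := fun g => by
    rw [ZMod.natCast_mul_val_castHom_mul hd, ← hs_eq]
  refine ⟨Set.ext fun x => ⟨?_, ?_⟩, ?_⟩
  · rintro ⟨g, hg, rfl⟩
    exact ⟨_, ⟨Units.map _ g, ⟨g, hg, rfl⟩, rfl⟩, key g⟩
  · rintro ⟨u, ⟨g', ⟨g, hg, rfl⟩, rfl⟩, rfl⟩
    exact ⟨g, hg, key g⟩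
  · rintro x ⟨g, -, rfl⟩
    exact (ZMod.gcd_val_unit_mul g s).trans hs

/-- For G ≤ (Z/nZ)ˣ, d ∣ n, d < n, G' the image of G mod n/d, and
s with gcd(s,n) = d: the set G·s equals d · (G' · (s/d)), and is contained in
{a : gcd(a,n) = d}. -/
theorem stmt_5 (n : ℕ) (hn : 2 ≤ n) (G : Subgroup (ZMod n)ˣ)
    (d : ℕ) (hd : d ∣ n) (hdn : d < n)
    (s : ZMod n) (hs : Nat.gcd s.val n = d) :
    let G' : Subgroup (ZMod (n / d))ˣ :=
      Subgroup.map (Units.map (ZMod.castHom (Nat.div_dvd_of_dvd hd) (ZMod (n / d))).toMonoidHom) G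
    ({x : ZMod n | ∃ g : (ZMod n)ˣ, g ∈ G ∧ x = (g : ZMod n) * s} =
      (fun u : ZMod (n / d) => ((d * u.val : ℕ) : ZMod n)) ''
        {u : ZMod (n / d) | ∃ g' : (ZMod (n / d))ˣ, g' ∈ G' ∧
          u = (g' : ZMod (n / d)) * ((s.val / d : ℕ) : ZMod (n / d))}) ∧
    {x : ZMod n | ∃ g : (ZMod n)ˣ, g ∈ G ∧ x = (g : ZMod n) * s} ⊆
      {a : ZMod n | Nat.gcd a.val n = d} :=
  stmt_5_general n hn G d hd s hs
end

section
/- Let F be a finite field, S* a subgroup of F^×, and a, b, a', b' ∈ F such that a + b and a' + b' lie in the same coset of S* in F (i.e., either both are 0, or both are nonzero with (a+b)/(a'+b') ∈ S*). With γ uniform on S* and z uniform on F independent, the joint distribution of (γ·a + z, γ·b - z) equals the joint distribution of (γ·a' + z, γ·b' - z). -/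
/-!
Adding the two coordinates eliminates the mask: `(γa + z) + (γb - z) = γ(a + b)`, and once `γ`
is fixed the first coordinate determines `z`. So the number of `(γ, z)` producing `(x, y)` is the
number of `γ ∈ S*` with `γ(a + b) = x + y`, and this count is unchanged when `a + b` is multiplied
by an element of `S*`, since right translation by it permutes `S*`.
-/

section ExpandRandomize

variable {R : Type*} [CommRing R] (S : Subgroup Rˣ)

lemma card_masked_fiber_eq_card_scaled_sum (a b x y : R) :
    Nat.card {ω : ↥S × R // ((ω.1 : Rˣ) : R) * a + ω.2 = x ∧ ((ω.1 : Rˣ) : R) * b - ω.2 = y} =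
      Nat.card {γ : ↥S // ((γ : Rˣ) : R) * (a + b) = x + y} := by
  apply Nat.card_congr
  exact
    { toFun := fun ω => ⟨ω.1.1, by linear_combination ω.2.1 + ω.2.2⟩
      invFun := fun γ => ⟨(γ.1, x - ((γ.1 : Rˣ) : R) * a), by ring, by
        linear_combination γ.2⟩
      left_inv := fun ω => by
        obtain ⟨⟨γ, z⟩, hx, -⟩ := ω
        ext
        · rfl
        · simp only [← hx]; ring
      right_inv := fun _ => rfl }

lemma card_scaled_eq_of_eq_mul_mem {c c' : R} {s : Rˣ} (hs : s ∈ S) (hc : c = c' * s) (t : R) :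
    Nat.card {γ : ↥S // ((γ : Rˣ) : R) * c = t} =
      Nat.card {γ : ↥S // ((γ : Rˣ) : R) * c' = t} := by
  apply Nat.card_congr
  refine (Equiv.mulRight (⟨s, hs⟩ : S)).subtypeEquiv fun γ => ?_
  simp only [Equiv.coe_mulRight, Subgroup.coe_mul, Units.val_mul, hc]
  ring_nf

end ExpandRandomize

theorem stmt_10_general (F : Type*) [Field F] (S : Subgroup Fˣ) (a b a' b' : F)
    (h : (a + b = 0 ∧ a' + b' = 0) ∨
      (a + b ≠ 0 ∧ a' + b' ≠ 0 ∧ ∃ s : Fˣ, s ∈ S ∧ a + b = (a' + b') * (s : F))) :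
    ∀ x y : F,
      Nat.card {ω : ↥S × F // ((ω.1 : Fˣ) : F) * a + ω.2 = x ∧
          ((ω.1 : Fˣ) : F) * b - ω.2 = y} =
        Nat.card {ω : ↥S × F // ((ω.1 : Fˣ) : F) * a' + ω.2 = x ∧
          ((ω.1 : Fˣ) : F) * b' - ω.2 = y} := by
  intro x y
  rw [card_masked_fiber_eq_card_scaled_sum, card_masked_fiber_eq_card_scaled_sum]
  rcases h with ⟨hab, hab'⟩ | ⟨-, -, s, hs, hab⟩
  · rw [hab, hab']
  · exact card_scaled_eq_of_eq_mul_mem S hs hab (x + y)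

/-- If a+b and a'+b' lie in the same coset of the subgroup S* of
Fˣ (both zero, or both nonzero with ratio in S*), then (γa+z, γb-z) and
(γa'+z, γb'-z) are identically distributed (γ uniform on S*, z uniform on F,
independent); expressed by equality of outcome counts over Ω = S* × F. -/
theorem stmt_10 (F : Type*) [Field F] [Fintype F] (S : Subgroup Fˣ) (a b a' b' : F)
    (h : (a + b = 0 ∧ a' + b' = 0) ∨
      (a + b ≠ 0 ∧ a' + b' ≠ 0 ∧ ∃ s : Fˣ, s ∈ S ∧ a + b = (a' + b') * (s : F))) :
    ∀ x y : F,
      Nat.card {ω : ↥S × F // ((ω.1 : Fˣ) : F) * a + ω.2 = x ∧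
          ((ω.1 : Fˣ) : F) * b - ω.2 = y} =
        Nat.card {ω : ↥S × F // ((ω.1 : Fˣ) : F) * a' + ω.2 = x ∧
          ((ω.1 : Fˣ) : F) * b' - ω.2 = y} :=
  stmt_10_general F S a b a' b' h
end
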